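/- arXiv:1310.0133 — 2 statements merged into one kernel-verified Lean document; each statement's English description precedes it below -/
import Mathlib

section
/- In the static case V = 0 with the blade element model (γ = 0, α = β, C_L = C_{L_α}(β − α₀), C_D = C_{D₀} + k C_{L_α}²(β − α₀)², nonnegative integrable chord c, ρ > 0, m ≥ 1, d > 0), fix a commanded thrust T_c > 0. For β > α₀, write the required power as P(β) = 2π M(β) (T_c / K(β))^{3/2}, where K(β) = A·(β − α₀) with A = 0.5 m ρ d² C_{L_α} ∫₀^{d/2} (2πr/d)² c(r) dr > 0 and M(β) = B + C·(β − α₀)² with B = 0.5 m ρ d² C_{D₀} ∫₀^{d/2} (2πr/d)² r c(r) dr > 0 and C = 0.5 m ρ d² k C_{L_α}² ∫₀^{d/2} (2πr/d)² r c(r) dr > 0. Then P(β) → ∞ as β → α₀⁺ and as β → ∞, and P attains a global minimum on (α₀, ∞) at the unique β* > α₀ satisfying (β* − α₀)² = 3B/C. -/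
/-!
Substituting `s = √(β - α₀)` turns the required power into
`P β = 2π (T_c / A)^{3/2} · (B + C s⁴) / s³ = 2π (T_c / A)^{3/2} · (B / s³ + C s)`.
The first term blows up as `s → 0⁺`, the second as `s → ∞`. At the point `u` with
`C u⁴ = 3B`, the comparison `(B + C u⁴) v³ ≤ (B + C v⁴) u³` with any `v > 0` is the
AM–GM inequality `4 u v³ ≤ u⁴ + 3 v⁴`.
-/

open Real MeasureTheory Filter Topology

noncomputable def pitchCost (B C s : ℝ) : ℝ := (B + C * s ^ 4) / s ^ 3

section PitchCost

variable {B C : ℝ}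

theorem tendsto_pitchCost_nhdsGT_zero (hB : 0 < B) (hC : 0 < C) :
    Tendsto (pitchCost B C) (𝓝[>] 0) atTop := by
  have hcube : Tendsto (fun s : ℝ => s ^ 3) (𝓝[>] 0) (𝓝[>] 0) := by
    refine tendsto_nhdsWithin_iff.mpr ⟨?_, ?_⟩
    · simpa using ((continuous_pow 3).tendsto (0 : ℝ)).mono_left nhdsWithin_le_nhds
    · filter_upwards [self_mem_nhdsWithin] with s (hs : 0 < s)
      exact pow_pos hs 3
  refine tendsto_atTop_mono' _ ?_ (hcube.inv_tendsto_nhdsGT_zero.const_mul_atTop hB)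
  filter_upwards [self_mem_nhdsWithin] with s (hs : 0 < s)
  rw [Pi.inv_apply, ← div_eq_mul_inv, pitchCost]
  gcongr
  nlinarith [pow_pos hs 4]

theorem tendsto_pitchCost_atTop (hB : 0 < B) (hC : 0 < C) :
    Tendsto (pitchCost B C) atTop atTop := by
  refine tendsto_atTop_mono' _ ?_ (tendsto_id.const_mul_atTop hC)
  filter_upwards [eventually_gt_atTop 0] with s (hs : 0 < s)
  rw [id, pitchCost, le_div_iff₀ (by positivity)]
  nlinarith

theorem pitchCost_le_of_mul_pow_four_eq (hC : 0 < C) {u v : ℝ} (hu : 0 < u) (hv : 0 < v)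
    (huB : C * u ^ 4 = 3 * B) :
    pitchCost B C u ≤ pitchCost B C v := by
  have amgm : 4 * u * v ^ 3 ≤ u ^ 4 + 3 * v ^ 4 := by
    nlinarith [mul_nonneg (sq_nonneg (u - v)) (by positivity : 0 ≤ u ^ 2 + 2 * u * v + 3 * v ^ 2)]
  obtain rfl : B = C * u ^ 4 / 3 := by linarith
  rw [pitchCost, pitchCost, div_le_div_iff₀ (by positivity) (by positivity)]
  linear_combination (C * u ^ 3 / 3) * amgm

end PitchCost

theorem sqrt_pow_four {x : ℝ} (hx : 0 ≤ x) : √x ^ 4 = x ^ 2 := by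
  rw [show 4 = 2 * 2 from rfl, pow_mul, sq_sqrt hx]

theorem rpow_three_div_two_eq_sqrt_pow {x : ℝ} (hx : 0 ≤ x) :
    x ^ ((3 : ℝ) / 2) = √x ^ 3 := by
  rw [rpow_div_two_eq_sqrt _ hx]
  norm_cast

theorem tendsto_sqrt_sub_nhdsGT (a : ℝ) : Tendsto (fun x => √(x - a)) (𝓝[>] a) (𝓝[>] 0) := by
  refine tendsto_nhdsWithin_iff.mpr ⟨?_, ?_⟩
  · exact ((continuous_sqrt.comp (continuous_sub_right a)).tendsto' a 0 (by simp)).mono_left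
      nhdsWithin_le_nhds
  · filter_upwards [self_mem_nhdsWithin] with x (hx : a < x)
    exact sqrt_pos.mpr (sub_pos.mpr hx)

theorem tendsto_sqrt_sub_atTop (a : ℝ) : Tendsto (fun x => √(x - a)) atTop atTop :=
  tendsto_sqrt_atTop.comp (tendsto_atTop_add_const_right _ (-a) tendsto_id)

theorem power_eq_mul_pitchCost_sqrt (B C : ℝ) {T A x : ℝ} (hT : 0 ≤ T) (hA : 0 ≤ A)
    (hx : 0 < x) :
    2 * π * (B + C * x ^ 2) * (T / (A * x)) ^ ((3 : ℝ) / 2) =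
      2 * π * (T / A) ^ ((3 : ℝ) / 2) * pitchCost B C √x := by
  rw [← sqrt_pow_four hx.le, ← div_div, div_rpow (by positivity) hx.le,
    rpow_three_div_two_eq_sqrt_pow hx.le, pitchCost]
  ring

theorem required_power_has_unique_optimal_pitch_general
    (α₀ T_c : ℝ)
    (hTc : 0 < T_c)
    (A B C : ℝ)
    (hApos : 0 < A)
    (hBpos : 0 < B)
    (hCpos : 0 < C)
    (K M P : ℝ → ℝ)
    (hK : ∀ β, K β = A * (β - α₀))
    (hM : ∀ β, M β = B + C * (β - α₀) ^ 2)
    (hP : ∀ β, α₀ < β → P β = 2 * π * M β * (T_c / K β) ^ ((3:ℝ) / 2)) :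
    Tendsto P (𝓝[>] α₀) atTop ∧
    Tendsto P atTop atTop ∧
    ∃! βstar : ℝ, α₀ < βstar ∧ (βstar - α₀) ^ 2 = 3 * B / C ∧
      ∀ β, α₀ < β → P βstar ≤ P β := by
  set κ := 2 * π * (T_c / A) ^ ((3:ℝ) / 2)
  have hκ : 0 < κ := by positivity
  have hP_pitchCost : ∀ β, α₀ < β → P β = κ * pitchCost B C √(β - α₀) := fun β hβ => by
    rw [hP β hβ, hM, hK, power_eq_mul_pitchCost_sqrt B C hTc.le hApos.le (sub_pos.mpr hβ)]
  refine ⟨?_, ?_, ?_⟩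
  · refine (((tendsto_pitchCost_nhdsGT_zero hBpos hCpos).comp
      (tendsto_sqrt_sub_nhdsGT α₀)).const_mul_atTop hκ).congr' ?_
    filter_upwards [self_mem_nhdsWithin] with β (hβ : α₀ < β)
    exact (hP_pitchCost β hβ).symm
  · refine (((tendsto_pitchCost_atTop hBpos hCpos).comp
      (tendsto_sqrt_sub_atTop α₀)).const_mul_atTop hκ).congr' ?_
    filter_upwards [eventually_gt_atTop α₀] with β hβ
    exact (hP_pitchCost β hβ).symm
  · set xstar := √(3 * B / C) with hxstar
    have hxstar_pos : 0 < xstar := sqrt_pos.mpr (by positivity)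
    have hxstar_sq : xstar ^ 2 = 3 * B / C := sq_sqrt (by positivity)
    have hcrit : C * √xstar ^ 4 = 3 * B := by
      rw [sqrt_pow_four hxstar_pos.le, hxstar_sq]
      field_simp
    refine ⟨α₀ + xstar,
      ⟨by linarith, by rw [add_sub_cancel_left, hxstar_sq], fun β hβ => ?_⟩, ?_⟩
    · rw [hP_pitchCost _ (by linarith), hP_pitchCost β hβ, add_sub_cancel_left]
      exact mul_le_mul_of_nonneg_left (pitchCost_le_of_mul_pow_four_eq hCpos
        (sqrt_pos.mpr hxstar_pos) (sqrt_pos.mpr (sub_pos.mpr hβ)) hcrit) hκ.le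
    · rintro β ⟨hβ, hβ_sq, -⟩
      rw [hxstar, ← hβ_sq, sqrt_sq (sub_pos.mpr hβ).le]
      ring

/-- Static case `V = 0`: fix a commanded thrust `T_c > 0`. For `β > α₀` the required
power is `P(β) = 2π M(β) (T_c / K(β))^{3/2}` with `K(β) = A(β − α₀)` and
`M(β) = B + C(β − α₀)²`, where the positive constants `A`, `B`, `C` are given by the
blade-element integrals. Then `P(β) → ∞` as `β → α₀⁺` and as `β → ∞`, and `P` attains
a global minimum on `(α₀, ∞)` at the unique `β* > α₀` with `(β* − α₀)² = 3B/C`. -/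
theorem required_power_has_unique_optimal_pitch
    (m : ℕ) (hm : 1 ≤ m)
    (ρ d CLα CD0 k α₀ T_c : ℝ)
    (hρ : 0 < ρ) (hd : 0 < d) (hCLα : 0 < CLα) (hTc : 0 < T_c)
    (c : ℝ → ℝ)
    (hc_int : IntervalIntegrable c volume 0 (d / 2))
    (hc_nonneg : ∀ r ∈ Set.Icc 0 (d / 2), 0 ≤ c r)
    (A B C : ℝ)
    (hA : A = 0.5 * (m : ℝ) * ρ * d ^ 2 * CLα *
      ∫ r in (0:ℝ)..(d / 2), (2 * π * r / d) ^ 2 * c r)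
    (hApos : 0 < A)
    (hB : B = 0.5 * (m : ℝ) * ρ * d ^ 2 * CD0 *
      ∫ r in (0:ℝ)..(d / 2), (2 * π * r / d) ^ 2 * r * c r)
    (hBpos : 0 < B)
    (hC : C = 0.5 * (m : ℝ) * ρ * d ^ 2 * k * CLα ^ 2 *
      ∫ r in (0:ℝ)..(d / 2), (2 * π * r / d) ^ 2 * r * c r)
    (hCpos : 0 < C)
    (K M P : ℝ → ℝ)
    (hK : ∀ β, K β = A * (β - α₀))
    (hM : ∀ β, M β = B + C * (β - α₀) ^ 2)
    (hP : ∀ β, α₀ < β → P β = 2 * π * M β * (T_c / K β) ^ ((3:ℝ) / 2)) :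
    Tendsto P (𝓝[>] α₀) atTop ∧
    Tendsto P atTop atTop ∧
    ∃! βstar : ℝ, α₀ < βstar ∧ (βstar - α₀) ^ 2 = 3 * B / C ∧
      ∀ β, α₀ < β → P βstar ≤ P β :=
  required_power_has_unique_optimal_pitch_general α₀ T_c hTc A B C hApos hBpos hCpos K M P hK hM hP
end

section
/- Let P : ℝ → ℝ be defined for β > α₀ by P(β) = 2π(B + C(β − α₀)²)·(T_c/(A(β − α₀)))^{3/2} with constants A, B, C, T_c > 0. Then P is strictly convex on the interval (α₀, α₀ + √(3B/C)] and strictly increasing on [α₀ + √(3B/C), ∞); consequently every stationary point of P on (α₀, ∞) is the global minimizer β* = α₀ + √(3B/C), so a descent scheme on β that decreases β when P increases and increases β when P decreases cannot converge to any point other than β*. -/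
open Real Set

/-!
With `x = β - α₀`, eliminating the rotational speed gives
`P(β) = K (B x^(-3/2) + C x^(1/2))` with `K = 2π (T_c/A)^(3/2) > 0`, and `K` can be absorbed
into `B` and `C` without changing `√(3B/C)`. The derivative `x^(-5/2) (C x² - 3B) / 2` has the
sign of `x - √(3B/C)`, because `C x² - 3B` factors as `C (x - √(3B/C)) (x + √(3B/C))`; and the
second derivative `x^(-7/2) (15B - C x²) / 4` is positive as long as `x < √(15B/C)`.
Monotonicity beyond `√(3B/C)`, convexity below it and uniqueness of the stationary point follow.
-/

noncomputable def powerProfile (B C α₀ β : ℝ) : ℝ :=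
  B * (β - α₀) ^ (-3 / 2 : ℝ) + C * (β - α₀) ^ (1 / 2 : ℝ)

noncomputable def powerProfileDeriv (B C α₀ β : ℝ) : ℝ :=
  (β - α₀) ^ (-5 / 2 : ℝ) * (C * (β - α₀) ^ 2 - 3 * B) / 2

theorem strictConvexOn_of_hasDerivAt2_pos {D : Set ℝ} (hD : Convex ℝ D) {f f' f'' : ℝ → ℝ}
    (hf : ∀ x ∈ D, HasDerivAt f (f' x) x) (hf' : ∀ x ∈ interior D, HasDerivAt f' (f'' x) x)
    (hf'' : ∀ x ∈ interior D, 0 < f'' x) : StrictConvexOn ℝ D f := by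
  have hderiv : EqOn f' (deriv f) (interior D) := fun x hx =>
    (hf x (interior_subset hx)).deriv.symm
  refine StrictMonoOn.strictConvexOn_of_deriv hD
    (fun x hx => (hf x hx).continuousAt.continuousWithinAt) ?_
  refine (strictMonoOn_of_hasDerivWithinAt_pos (f' := f'') hD.interior
    (fun x hx => (hf' x hx).continuousAt.continuousWithinAt) (fun x hx => ?_) ?_).congr hderiv
  · rw [interior_interior] at hx
    exact (hf' x hx).hasDerivWithinAt
  · simpa only [interior_interior] using hf''

theorem mul_sq_sub_eq_mul_sub_sqrt_mul_add_sqrt {C D : ℝ} (hC : 0 < C) (hD : 0 ≤ D) (x : ℝ) :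
    C * x ^ 2 - D = C * (x - √(D / C)) * (x + √(D / C)) := by
  have h : C * √(D / C) ^ 2 = D := by
    rw [sq_sqrt (div_nonneg hD hC.le), mul_div_cancel₀ _ hC.ne']
  linear_combination h

theorem mul_rpow_three_halves_eq_powerProfile {A T α₀ β : ℝ} (hTA : 0 ≤ T / A) (B C : ℝ)
    (hβ : α₀ < β) :
    2 * π * (B + C * (β - α₀) ^ 2) * (T / (A * (β - α₀))) ^ ((3:ℝ) / 2) =
      powerProfile (2 * π * (T / A) ^ ((3:ℝ) / 2) * B) (2 * π * (T / A) ^ ((3:ℝ) / 2) * C)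
        α₀ β := by
  have hx : 0 < β - α₀ := sub_pos.mpr hβ
  have h3 : (T / (A * (β - α₀))) ^ ((3:ℝ) / 2) =
      (T / A) ^ ((3:ℝ) / 2) * (β - α₀) ^ (-3 / 2 : ℝ) := by
    rw [← div_div, div_rpow hTA hx.le, show (-3 / 2 : ℝ) = -(3 / 2) by norm_num,
      rpow_neg hx.le, div_eq_mul_inv]
  have hpow : (β - α₀) ^ (1 / 2 : ℝ) = (β - α₀) ^ (-3 / 2 : ℝ) * (β - α₀) ^ 2 := by
    rw [← rpow_natCast, ← rpow_add hx]
    norm_num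
  rw [powerProfile, h3, hpow]
  ring

section Derivatives

variable {B C α₀ β : ℝ}

theorem hasDerivAt_powerProfile (hβ : α₀ < β) :
    HasDerivAt (powerProfile B C α₀) (powerProfileDeriv B C α₀ β) β := by
  have hx : 0 < β - α₀ := sub_pos.mpr hβ
  have hsub := (hasDerivAt_id' β).sub_const α₀
  have h := ((hsub.rpow_const (p := -3 / 2) (Or.inl hx.ne')).const_mul B).add
    ((hsub.rpow_const (p := 1 / 2) (Or.inl hx.ne')).const_mul C)
  refine h.congr_deriv ?_
  have hpow : (β - α₀) ^ (1 / 2 - 1 : ℝ) = (β - α₀) ^ (-5 / 2 : ℝ) * (β - α₀) ^ 2 := by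
    rw [← rpow_natCast, ← rpow_add hx]
    norm_num
  rw [show (-3 / 2 - 1 : ℝ) = -5 / 2 by norm_num, hpow, powerProfileDeriv]
  ring

theorem hasDerivAt_powerProfileDeriv (hβ : α₀ < β) :
    HasDerivAt (powerProfileDeriv B C α₀)
      ((β - α₀) ^ (-7 / 2 : ℝ) * (15 * B - C * (β - α₀) ^ 2) / 4) β := by
  have hx : 0 < β - α₀ := sub_pos.mpr hβ
  have hsub := (hasDerivAt_id' β).sub_const α₀
  have h := ((hsub.rpow_const (p := -5 / 2) (Or.inl hx.ne')).mul
    (((hsub.fun_pow 2).const_mul C).sub_const (3 * B))).div_const 2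
  refine h.congr_deriv ?_
  have hpow : (β - α₀) ^ (-5 / 2 : ℝ) = (β - α₀) ^ (-7 / 2 : ℝ) * (β - α₀) := by
    rw [← rpow_add_one hx.ne']
    norm_num
  rw [show (-5 / 2 - 1 : ℝ) = -7 / 2 by norm_num, hpow]
  ring

end Derivatives

section Shape

variable {B C α₀ : ℝ}

theorem strictConvexOn_powerProfile (hB : 0 ≤ B) (hC : 0 < C) :
    StrictConvexOn ℝ (Ioc α₀ (α₀ + √(15 * B / C))) (powerProfile B C α₀) := by
  refine strictConvexOn_of_hasDerivAt2_pos (convex_Ioc _ _)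
    (fun β hβ => hasDerivAt_powerProfile hβ.1)
    (fun β hβ => hasDerivAt_powerProfileDeriv (interior_subset hβ).1) fun β hβ => ?_
  rw [interior_Ioc] at hβ
  have hx : 0 < β - α₀ := sub_pos.mpr hβ.1
  have hlt : β - α₀ - √(15 * B / C) < 0 := by linarith [hβ.2]
  have h15 : 0 < 15 * B - C * (β - α₀) ^ 2 := by
    rw [← neg_sub, mul_sq_sub_eq_mul_sub_sqrt_mul_add_sqrt hC (by positivity)]
    have : 0 < β - α₀ + √(15 * B / C) := by positivity
    nlinarith [mul_pos hC this]
  positivity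

theorem strictMonoOn_powerProfile (hB : 0 < B) (hC : 0 < C) :
    StrictMonoOn (powerProfile B C α₀) (Ici (α₀ + √(3 * B / C))) := by
  have hs : 0 < √(3 * B / C) := sqrt_pos.mpr (by positivity)
  have hderiv : ∀ β ∈ Ici (α₀ + √(3 * B / C)),
      HasDerivAt (powerProfile B C α₀) (powerProfileDeriv B C α₀ β) β :=
    fun β hβ => hasDerivAt_powerProfile (by linarith [mem_Ici.mp hβ])
  refine strictMonoOn_of_hasDerivWithinAt_pos (convex_Ici _)
    (fun β hβ => (hderiv β hβ).continuousAt.continuousWithinAt)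
    (fun β hβ => (hderiv β (interior_subset hβ)).hasDerivWithinAt) fun β hβ => ?_
  rw [interior_Ici, mem_Ioi] at hβ
  have hx : 0 < β - α₀ := by linarith
  have hgt : 0 < β - α₀ - √(3 * B / C) := by linarith
  rw [powerProfileDeriv, mul_sq_sub_eq_mul_sub_sqrt_mul_add_sqrt hC (by positivity)]
  positivity

theorem powerProfileDeriv_eq_zero_iff (hB : 0 ≤ B) (hC : 0 < C) {β : ℝ} (hβ : α₀ < β) :
    powerProfileDeriv B C α₀ β = 0 ↔ β = α₀ + √(3 * B / C) := by
  have hx : 0 < β - α₀ := sub_pos.mpr hβ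
  have hrpow : (β - α₀) ^ (-5 / 2 : ℝ) ≠ 0 := (rpow_pos_of_pos hx _).ne'
  have hadd : β - α₀ + √(3 * B / C) ≠ 0 := by positivity
  rw [powerProfileDeriv, mul_sq_sub_eq_mul_sub_sqrt_mul_add_sqrt hC (by positivity)]
  simp only [div_eq_zero_iff, mul_eq_zero, hrpow, hC.ne', hadd, sub_eq_zero, false_or, or_false,
    OfNat.ofNat_ne_zero]
  constructor <;> intro h <;> linarith

end Shape

/-- Let `P(β) = 2π(B + C(β − α₀)²)(T_c/(A(β − α₀)))^{3/2}` for `β > α₀`, with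
constants `A, B, C, T_c > 0`. Then `P` is strictly convex on `(α₀, α₀ + √(3B/C)]`
and strictly increasing on `[α₀ + √(3B/C), ∞)`; consequently every stationary point
of `P` on `(α₀, ∞)` is the global minimizer `β* = α₀ + √(3B/C)`. -/
theorem required_power_convexity_and_stationary_points
    (A B C T_c α₀ : ℝ)
    (hA : 0 < A) (hB : 0 < B) (hC : 0 < C) (hTc : 0 < T_c)
    (P : ℝ → ℝ)
    (hP : ∀ β, α₀ < β →
      P β = 2 * π * (B + C * (β - α₀) ^ 2) *
        (T_c / (A * (β - α₀))) ^ ((3:ℝ) / 2)) :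
    StrictConvexOn ℝ (Set.Ioc α₀ (α₀ + Real.sqrt (3 * B / C))) P ∧
    StrictMonoOn P (Set.Ici (α₀ + Real.sqrt (3 * B / C))) ∧
    ∀ β, α₀ < β → HasDerivAt P 0 β → β = α₀ + Real.sqrt (3 * B / C) := by
  set K := 2 * π * (T_c / A) ^ ((3:ℝ) / 2)
  have hK : 0 < K := by positivity
  have hKB : 0 < K * B := mul_pos hK hB
  have hKC : 0 < K * C := mul_pos hK hC
  have hPeq : EqOn P (powerProfile (K * B) (K * C) α₀) (Ioi α₀) := fun β hβ =>
    (hP β hβ).trans (mul_rpow_three_halves_eq_powerProfile (div_nonneg hTc.le hA.le) B C hβ)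
  have hs : √(3 * (K * B) / (K * C)) = √(3 * B / C) := by
    rw [mul_left_comm, mul_div_mul_left _ _ hK.ne']
  rw [← hs]
  have hs_pos : 0 < √(3 * (K * B) / (K * C)) := sqrt_pos.mpr (by positivity)
  have hs_le : √(3 * (K * B) / (K * C)) ≤ √(15 * (K * B) / (K * C)) := by gcongr; norm_num
  refine ⟨?_, ?_, fun β hβ hβ0 => ?_⟩
  · exact ((strictConvexOn_powerProfile hKB.le hKC).subset
      (Ioc_subset_Ioc_right (by linarith)) (convex_Ioc _ _)).congr
      (hPeq.symm.mono Ioc_subset_Ioi_self)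
  · exact (strictMonoOn_powerProfile hKB hKC).congr
      (hPeq.symm.mono (Ici_subset_Ioi.mpr (by linarith)))
  · have hderiv := (hasDerivAt_powerProfile (C := K * C) hβ).congr_of_eventuallyEq
      (hPeq.eventuallyEq_of_mem (Ioi_mem_nhds hβ))
    exact (powerProfileDeriv_eq_zero_iff hKB.le hKC hβ).mp (hderiv.unique hβ0)
end
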